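/- Let G_n be the caterpillar on 3n vertices with central path v_1,…,v_n where each v_i is adjacent to exactly two leaves. Then λ_H(G_n) = n. -/

import Mathlib

/-!
Every vertex of a Hamiltonian graph on at least three vertices has two distinct neighbours, while
each of the `2n` leaves of the caterpillar has only one; so every leaf lies on an added edge, and an
edge covers at most two leaves, forcing at least `n` added edges. Conversely the closed tour
`u₀ v₀ u₁ u₂ v₁ u₃ … u_{2n-1} u₀` uses caterpillar edges except for the `n` steps from `u_{2j+1}`
to `u_{2j+2}` (indices mod `2n`), so `n` added edges suffice.
-/

/-- The caterpillar on `3n` vertices: central path `v_0, …, v_{n-1}` (the `Sum.inl` vertices),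
each `v_i` adjacent to exactly two leaves `u_{2i}` and `u_{2i+1}` (the `Sum.inr` vertices). -/
def caterpillar2 (n : ℕ) : SimpleGraph (Fin n ⊕ Fin (2 * n)) :=
  SimpleGraph.fromRel (fun a b =>
    match a, b with
    | Sum.inl i, Sum.inl j => i.val + 1 = j.val
    | Sum.inl i, Sum.inr j => j.val = 2 * i.val ∨ j.val = 2 * i.val + 1
    | _, _ => False)

open Finset

namespace SimpleGraph

variable {V : Type*} {G : SimpleGraph V}

theorem cycleGraph_isContained_of_adj_succ {m : ℕ} (f : ℕ → V) (hinj : Set.InjOn f (Set.Iio m))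
    (hclose : f m = f 0) (hadj : ∀ i < m, G.Adj (f i) (f (i + 1))) : cycleGraph m ⊑ G := by
  refine ⟨⟨⟨fun i => f i, fun {u v} huv => ?_⟩, fun u v h => Fin.ext (hinj u.2 v.2 h)⟩⟩
  have hsucc : ∀ u v : Fin m, (v - u).val = 1 → G.Adj (f u) (f v) := by
    intro u v h
    rcases le_or_gt u v with hle | hlt
    · rw [Fin.sub_val_of_le hle] at h
      simpa [show (v : ℕ) = u + 1 by omega] using hadj u u.2
    · rw [Fin.coe_sub_iff_lt.mpr hlt] at h
      have := hadj u u.2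
      rwa [show (u : ℕ) + 1 = m by omega, hclose, ← show (v : ℕ) = 0 by omega] at this
  rcases cycleGraph_adj'.mp huv with h | h
  · exact (hsucc v u h).symm
  · exact hsucc u v h

variable [Fintype V] [DecidableEq V]

theorem IsHamiltonian.of_cycleGraph_isContained (hV : 3 ≤ Fintype.card V)
    (h : cycleGraph (Fintype.card V) ⊑ G) : G.IsHamiltonian := by
  obtain ⟨v, p, hp, hlen⟩ := (cycleGraph_isContained_iff (by omega)).mp h
  exact fun _ => ⟨v, p, Walk.isHamiltonianCycle_iff_isCycle_and_length_eq.mpr ⟨hp, hlen⟩⟩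

theorem IsHamiltonian.exists_adj_ne_adj (hG : G.IsHamiltonian) (hV : 3 ≤ Fintype.card V)
    (v : V) : ∃ x y, x ≠ y ∧ G.Adj v x ∧ G.Adj v y := by
  have : Nontrivial V := Fintype.one_lt_card_iff_nontrivial.mp (by omega)
  obtain ⟨p, hp⟩ := hG.exists_isHamiltonianCycle v
  have hnil := hp.isCycle.not_nil
  exact ⟨_, _, hp.isCycle.snd_ne_penultimate, p.adj_snd hnil, (p.adj_penultimate hnil).symm⟩

theorem exists_isHamiltonian_ncard_sdiff_le [DecidableRel G.Adj] (hV : 3 ≤ Fintype.card V)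
    (f : ℕ → V) (hinj : Set.InjOn f (Set.Iio (Fintype.card V)))
    (hclose : f (Fintype.card V) = f 0) :
    ∃ H : SimpleGraph V, G ≤ H ∧ H.IsHamiltonian ∧ (H.edgeSet \ G.edgeSet).ncard ≤
      #{i ∈ range (Fintype.card V) | ¬ G.Adj (f i) (f (i + 1))} := by
  set m := Fintype.card V
  let C : SimpleGraph V := fromRel fun a b => ∃ i < m, a = f i ∧ b = f (i + 1)
  have hne : ∀ i < m, f i ≠ f (i + 1) := by
    intro i hi h
    rcases (show i + 1 < m ∨ i + 1 = m by omega) with hlt | heq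
    · exact absurd (hinj hi hlt h) (by omega)
    · rw [heq, hclose] at h
      have := hinj hi (show 0 < m by omega) h
      omega
  refine ⟨G ⊔ C, le_sup_left, ?_, ?_⟩
  · refine IsHamiltonian.of_cycleGraph_isContained hV
      (cycleGraph_isContained_of_adj_succ f hinj hclose fun i hi => ?_)
    exact Or.inr ((fromRel_adj _ _ _).mpr ⟨hne i hi, Or.inl ⟨i, hi, rfl, rfl⟩⟩)
  · have hsub : (G ⊔ C).edgeSet \ G.edgeSet ⊆
        ({i ∈ range m | ¬ G.Adj (f i) (f (i + 1))}.image fun i => s(f i, f (i + 1)) :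
          Finset _) := by
      rintro ⟨a, b⟩ ⟨hH, hG⟩
      simp only [mem_edgeSet, sup_adj, fromRel_adj, C] at hH hG
      obtain ⟨i, hi, rfl, rfl⟩ | ⟨i, hi, rfl, rfl⟩ := (hH.resolve_left hG).2
      · exact mem_image.mpr ⟨i, by simp [hi, hG], rfl⟩
      · exact mem_image.mpr ⟨i, by simpa [hi, G.adj_comm] using hG, Sym2.eq_swap⟩
    calc _ ≤ _ := Set.ncard_le_ncard hsub (Finset.finite_toSet _)
      _ = _ := Set.ncard_coe_finset _
      _ ≤ _ := card_image_le

/-- A vertex with at most one `G`-neighbour has two neighbours in the Hamiltonian graph `H`, so it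
lies on an edge of `H` outside `G`; each such edge serves at most two vertices. -/
theorem card_le_two_mul_ncard_edgeSet_sdiff {H : SimpleGraph V} (hH : H.IsHamiltonian)
    (hV : 3 ≤ Fintype.card V) {s : Finset V}
    (hs : ∀ v ∈ s, ∀ x y, G.Adj v x → G.Adj v y → x = y) :
    #s ≤ 2 * (H.edgeSet \ G.edgeSet).ncard := by
  have hfin := (H.edgeSet \ G.edgeSet).toFinite
  have hcover : ∀ v ∈ s, ∃ e ∈ H.edgeSet \ G.edgeSet, v ∈ e := by
    intro v hv
    obtain ⟨x, y, hxy, hx, hy⟩ := hH.exists_adj_ne_adj hV v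
    by_cases hGx : G.Adj v x
    · exact ⟨s(v, y), ⟨hy, fun hGy => hxy (hs v hv x y hGx hGy)⟩, Sym2.mem_mk_left _ _⟩
    · exact ⟨s(v, x), ⟨hx, hGx⟩, Sym2.mem_mk_left _ _⟩
  have := card_mul_le_card_mul (fun v e => v ∈ e) (s := s) (t := hfin.toFinset) (m := 1)
    (n := 2) (fun v hv => ?_) (fun e _ => ?_)
  · rw [Set.ncard_eq_toFinset_card _ hfin]
    omega
  · obtain ⟨e, he, hve⟩ := hcover v hv
    exact card_pos.mpr ⟨e, (mem_bipartiteAbove _).mpr ⟨hfin.mem_toFinset.mpr he, hve⟩⟩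
  · calc #(s.bipartiteBelow _ e) ≤ #e.toFinset :=
          card_le_card fun v hv => Sym2.mem_toFinset.mpr ((mem_bipartiteBelow _).mp hv).2
      _ ≤ 2 := by rw [Sym2.card_toFinset]; split <;> omega

end SimpleGraph

open SimpleGraph

namespace caterpillar2

variable {n : ℕ}

theorem card_vertices : Fintype.card (Fin n ⊕ Fin (2 * n)) = 3 * n := by
  simp only [Fintype.card_sum, Fintype.card_fin]
  ring

theorem eq_inl_of_adj_inr {j : Fin (2 * n)} {x : Fin n ⊕ Fin (2 * n)}
    (h : (caterpillar2 n).Adj (Sum.inr j) x) : x = Sum.inl ⟨j / 2, by omega⟩ := by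
  rcases x with i | i <;> simp [caterpillar2, Fin.ext_iff] at h ⊢
  omega

/-- The tour `u₀ v₀ u₁ u₂ v₁ u₃ …`: position `3j + r` holds `u_{2j}`, `v_j`, `u_{2j+1}` for
`r = 0, 1, 2`, with `j` taken mod `n` so that position `3n` returns to `u₀`. -/
def tour (hn : 0 < n) (t : ℕ) : Fin n ⊕ Fin (2 * n) :=
  if t % 3 = 1 then Sum.inl ⟨t / 3 % n, Nat.mod_lt _ hn⟩
  else Sum.inr ⟨2 * (t / 3 % n) + t % 3 / 2, by have := Nat.mod_lt (t / 3) hn; omega⟩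

variable (hn : 0 < n)

theorem tour_injOn : Set.InjOn (tour hn) (Set.Iio (3 * n)) := by
  intro s hs t ht h
  simp only [Set.mem_Iio] at hs ht
  have hs' : s / 3 % n = s / 3 := Nat.mod_eq_of_lt (by omega)
  have ht' : t / 3 % n = t / 3 := Nat.mod_eq_of_lt (by omega)
  unfold tour at h
  split_ifs at h <;> simp [Fin.ext_iff, hs', ht'] at h <;> omega

theorem tour_three_mul : tour hn (3 * n) = tour hn 0 := by
  simp [tour]

theorem adj_tour_succ {t : ℕ} (ht : t % 3 ≠ 2) :
    (caterpillar2 n).Adj (tour hn t) (tour hn (t + 1)) := by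
  have hdiv : (t + 1) / 3 = t / 3 := by omega
  unfold tour
  split_ifs <;> simp [caterpillar2, Fin.ext_iff, hdiv] <;> omega

theorem card_filter_not_adj_tour_le [DecidableRel (caterpillar2 n).Adj] :
    #{t ∈ range (3 * n) | ¬ (caterpillar2 n).Adj (tour hn t) (tour hn (t + 1))} ≤ n :=
  calc _ ≤ #((range n).image fun j => 3 * j + 2) := card_le_card fun t ht => by
          obtain ⟨ht, hadj⟩ := mem_filter.mp ht
          have h2 : t % 3 = 2 := by_contra fun h => hadj (adj_tour_succ hn h)
          exact mem_image.mpr ⟨t / 3, mem_range.mpr (by rw [mem_range] at ht; omega), by omega⟩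
    _ ≤ n := card_image_le.trans (card_range n).le

theorem exists_isHamiltonian_ncard_sdiff_le (hn : 0 < n) :
    ∃ H : SimpleGraph (Fin n ⊕ Fin (2 * n)), caterpillar2 n ≤ H ∧ H.IsHamiltonian ∧
      (H.edgeSet \ (caterpillar2 n).edgeSet).ncard ≤ n := by
  classical
  obtain ⟨H, hle, hH, hk⟩ := SimpleGraph.exists_isHamiltonian_ncard_sdiff_le (G := caterpillar2 n)
    (by rw [card_vertices]; omega) (tour hn) (card_vertices ▸ tour_injOn hn)
    (card_vertices ▸ tour_three_mul hn)
  rw [card_vertices] at hk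
  exact ⟨H, hle, hH, hk.trans (card_filter_not_adj_tour_le hn)⟩

theorem le_ncard_edgeSet_sdiff (hn : 0 < n) {H : SimpleGraph (Fin n ⊕ Fin (2 * n))}
    (hH : H.IsHamiltonian) :
    n ≤ (H.edgeSet \ (caterpillar2 n).edgeSet).ncard := by
  have := card_le_two_mul_ncard_edgeSet_sdiff (G := caterpillar2 n) (s := univ.map .inr) hH
    (by rw [card_vertices]; omega) fun v hv x y hx hy => ?_
  · simp only [card_map, card_univ, Fintype.card_fin] at this
    omega
  · obtain ⟨j, -, rfl⟩ := mem_map.mp hv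
    rw [eq_inl_of_adj_inr hx, eq_inl_of_adj_inr hy]

end caterpillar2

/-- the Hamiltonian completion number of the caterpillar with exactly two
leaves at each path vertex equals `n`. -/
theorem caterpillar2_hamiltonianCompletion (n : ℕ) (hn : 1 ≤ n) :
    IsLeast {k : ℕ | ∃ H : SimpleGraph (Fin n ⊕ Fin (2 * n)), caterpillar2 n ≤ H ∧
      H.IsHamiltonian ∧ (H.edgeSet \ (caterpillar2 n).edgeSet).ncard = k} n := by
  refine ⟨?_, ?_⟩
  · obtain ⟨H, hle, hH, hk⟩ := caterpillar2.exists_isHamiltonian_ncard_sdiff_le hn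
    exact ⟨H, hle, hH, le_antisymm hk (caterpillar2.le_ncard_edgeSet_sdiff hn hH)⟩
  · rintro k ⟨H, -, hH, rfl⟩
    exact caterpillar2.le_ncard_edgeSet_sdiff hn hH
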